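/- arXiv:1604.02578 — 6 statements merged into one kernel-verified Lean document; each statement's English description precedes it below -/
import Mathlib

section
/- Let P and Ω be real symmetric positive semi-definite n×n matrices, M an invertible real n×n matrix, and Q a real symmetric positive semi-definite n×n matrix. Set P' = M(I + PΩ)⁻¹PMᵀ + Q. Then P' is symmetric positive semi-definite and, in the Loewner order, Q ≤ P' ≤ MPMᵀ + Q. -/
/-!
Write `Y = 1 + P Ω`. Since `P` and `Ω` are Hermitian, `Yᴴ = 1 + Ω P`, so

  `Y⁻¹ P = Y⁻¹ (P Yᴴ) Y⁻ᴴ` with `P Yᴴ = P + P Ω P`,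
  `P - Y⁻¹ P = Y⁻¹ (P Ω P) = Y⁻¹ (P Ω P Yᴴ) Y⁻ᴴ` with `P Ω P Yᴴ = P Ω P + (P Ω) P (P Ω)ᴴ`,

and both middle matrices are visibly positive semidefinite. Conjugating by `M` and adding `Q`
gives the bounds. `Y` is invertible because, writing `P = Bᴴ B`,
`det (1 + Bᴴ B Ω) = det (1 + B Ω Bᴴ)` and `1 + B Ω Bᴴ` is positive definite.
-/

open Matrix
open scoped ComplexOrder

namespace Matrix.PosSemidef

variable {n 𝕜 : Type*} [Fintype n] [DecidableEq n] [RCLike 𝕜] {P Ω : Matrix n n 𝕜}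

open scoped MatrixOrder in
theorem isUnit_one_add_mul (hP : P.PosSemidef) (hΩ : Ω.PosSemidef) : IsUnit (1 + P * Ω) := by
  obtain ⟨B, rfl⟩ := CStarAlgebra.nonneg_iff_eq_star_mul_self.mp hP.nonneg
  have hpd : (1 + B * Ω * Bᴴ).PosDef := PosDef.one.add_posSemidef (hΩ.mul_mul_conjTranspose_same B)
  rw [isUnit_iff_isUnit_det, star_eq_conjTranspose, Matrix.mul_assoc, det_one_add_mul_comm]
  exact (isUnit_iff_isUnit_det _).mp hpd.isUnit

theorem inv_mul_of_mul_conjTranspose {Y A : Matrix n n 𝕜} (hY : IsUnit Y)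
    (h : (A * Yᴴ).PosSemidef) : (Y⁻¹ * A).PosSemidef := by
  have hYH : IsUnit Yᴴ.det := (isUnit_iff_isUnit_det _).mp ((isUnit_conjTranspose Y).mpr hY)
  convert h.mul_mul_conjTranspose_same Y⁻¹ using 1
  rw [conjTranspose_nonsing_inv, Matrix.mul_assoc, Matrix.mul_assoc, mul_nonsing_inv _ hYH,
    Matrix.mul_one]

theorem inv_one_add_mul_mul (hP : P.PosSemidef) (hΩ : Ω.PosSemidef) :
    ((1 + P * Ω)⁻¹ * P).PosSemidef := by
  refine inv_mul_of_mul_conjTranspose (hP.isUnit_one_add_mul hΩ) ?_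
  have hPY : P * (1 + P * Ω)ᴴ = P + P * Ω * Pᴴ := by
    rw [conjTranspose_add, conjTranspose_one, conjTranspose_mul, hP.isHermitian.eq,
      hΩ.isHermitian.eq]
    noncomm_ring
  rw [hPY]
  exact hP.add (hΩ.mul_mul_conjTranspose_same P)

theorem sub_inv_one_add_mul_mul (hP : P.PosSemidef) (hΩ : Ω.PosSemidef) :
    (P - (1 + P * Ω)⁻¹ * P).PosSemidef := by
  have hY := hP.isUnit_one_add_mul hΩ
  have hsub : P - (1 + P * Ω)⁻¹ * P = (1 + P * Ω)⁻¹ * (P * Ω * P) := calc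
    P - (1 + P * Ω)⁻¹ * P = (1 + P * Ω)⁻¹ * ((1 + P * Ω) * P) - (1 + P * Ω)⁻¹ * P := by
      rw [← Matrix.mul_assoc, nonsing_inv_mul _ ((isUnit_iff_isUnit_det _).mp hY), Matrix.one_mul]
    _ = (1 + P * Ω)⁻¹ * (P * Ω * P) := by
      rw [← Matrix.mul_sub]; congr 1; noncomm_ring
  rw [hsub]
  refine inv_mul_of_mul_conjTranspose hY ?_
  have hPΩPY : P * Ω * P * (1 + P * Ω)ᴴ = P * Ω * Pᴴ + (P * Ω) * P * (P * Ω)ᴴ := by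
    rw [conjTranspose_add, conjTranspose_one, conjTranspose_mul, hP.isHermitian.eq,
      hΩ.isHermitian.eq]
    noncomm_ring
  rw [hPΩPY]
  exact (hΩ.mul_mul_conjTranspose_same P).add (hP.mul_mul_conjTranspose_same _)

end Matrix.PosSemidef

theorem kf_step_bounds_general {n : ℕ} (P Ω M Q : Matrix (Fin n) (Fin n) ℝ)
    (hP : P.PosSemidef) (hΩ : Ω.PosSemidef) (hQ : Q.PosSemidef) :
    (M * (1 + P * Ω)⁻¹ * P * Mᵀ + Q).PosSemidef ∧
    ((M * (1 + P * Ω)⁻¹ * P * Mᵀ + Q) - Q).PosSemidef ∧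
    ((M * P * Mᵀ + Q) - (M * (1 + P * Ω)⁻¹ * P * Mᵀ + Q)).PosSemidef := by
  have conj_M {A : Matrix (Fin n) (Fin n) ℝ} (hA : A.PosSemidef) : (M * A * Mᵀ).PosSemidef := by
    simpa using hA.mul_mul_conjTranspose_same M
  have hpropagated : (M * (1 + P * Ω)⁻¹ * P * Mᵀ).PosSemidef := by
    simpa only [Matrix.mul_assoc] using conj_M (hP.inv_one_add_mul_mul hΩ)
  have hdiff : M * P * Mᵀ + Q - (M * (1 + P * Ω)⁻¹ * P * Mᵀ + Q)
      = M * (P - (1 + P * Ω)⁻¹ * P) * Mᵀ := by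
    noncomm_ring
  refine ⟨hpropagated.add hQ, by simpa using hpropagated, ?_⟩
  rw [hdiff]
  exact conj_M (hP.sub_inv_one_add_mul_mul hΩ)

/-- One step of the Kalman filter covariance recurrence with model noise:
`P' = M * (I + P * Ω)⁻¹ * P * Mᵀ + Q` is symmetric positive semi-definite and,
in the Loewner order, `Q ≤ P' ≤ M * P * Mᵀ + Q`. -/
theorem kf_step_bounds {n : ℕ} (P Ω M Q : Matrix (Fin n) (Fin n) ℝ)
    (hP : P.PosSemidef) (hΩ : Ω.PosSemidef) (hM : IsUnit M) (hQ : Q.PosSemidef) :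
    (M * (1 + P * Ω)⁻¹ * P * Mᵀ + Q).PosSemidef ∧
    ((M * (1 + P * Ω)⁻¹ * P * Mᵀ + Q) - Q).PosSemidef ∧
    ((M * P * Mᵀ + Q) - (M * (1 + P * Ω)⁻¹ * P * Mᵀ + Q)).PosSemidef :=
  kf_step_bounds_general P Ω M Q hP hΩ hQ
end

section
/- Let (M_k)_{k≥1} be invertible real n×n matrices, (Ω_k)_{k≥0} and (Q_k)_{k≥1} real symmetric positive semi-definite n×n matrices, P_0 a real symmetric positive semi-definite n×n matrix, and define P_{k+1} = M_{k+1}(I + P_kΩ_k)⁻¹P_kM_{k+1}ᵀ + Q_{k+1}. Let M_{k:l} = M_k M_{k-1}⋯M_{l+1} (with M_{k:k} = I) and Ξ_k = Σ_{l=1}^{k} M_{k:l}Q_lM_{k:l}ᵀ (Ξ_0 = 0). Then for every k ≥ 0, in the Loewner order, Q_k ≤ P_k ≤ M_{k:0}P_0M_{k:0}ᵀ + Ξ_k (for k = 0 the lower bound is 0 ≤ P_0). -/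
open Matrix

/-- `Mres M l j` is the resolvent `M_{(l+j):l} = M_{l+j} ⋯ M_{l+1}`
(product of `j` one-step propagators starting after time `l`), so that
`M_{k:l} = Mres M l (k - l)` for `k ≥ l`, and `M_{k:k} = Mres M k 0 = 1`. -/
def Mres {n : ℕ} (M : ℕ → Matrix (Fin n) (Fin n) ℝ) (l : ℕ) :
    ℕ → Matrix (Fin n) (Fin n) ℝ
  | 0 => 1
  | j + 1 => M (l + j + 1) * Mres M l j

/-- The controllability matrix `Ξ_k = Σ_{l=1}^{k} M_{k:l} * Q_l * M_{k:l}ᵀ`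
(with `Ξ_0 = 0`). -/
noncomputable def Xi {n : ℕ} (M Q : ℕ → Matrix (Fin n) (Fin n) ℝ) (k : ℕ) :
    Matrix (Fin n) (Fin n) ℝ :=
  ∑ l ∈ Finset.Icc 1 k, Mres M l (k - l) * Q l * (Mres M l (k - l))ᵀ

/-!
Write the forecast covariance as `P = Bᴴ B`. By the push-through identity the analysis step
`(1 + P Ω)⁻¹ P` equals `Bᴴ (1 + C)⁻¹ B` with `C = B Ω Bᴴ ≥ 0`, and `0 ≤ (1 + C)⁻¹ ≤ 1`; so the
analysis keeps the covariance positive semi-definite and can only decrease it. The lower bound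
`Q_k ≤ P_k` follows at once. For the upper bound, the gap between the free forecast and `P_{k+1}`
is `M_{k+1}` conjugating the previous gap plus the decrease `P_k - (1 + P_k Ω_k)⁻¹ P_k`, so it
stays positive semi-definite by induction.
-/

open scoped ComplexOrder

namespace Matrix

theorem PosSemidef.mul_mul_transpose_same {m k : Type*} [Fintype m] [Fintype k]
    {A : Matrix m m ℝ} (hA : A.PosSemidef) (B : Matrix k m ℝ) : (B * A * Bᵀ).PosSemidef := by
  simpa only [conjTranspose_eq_transpose_of_trivial] using hA.mul_mul_conjTranspose_same B

theorem inv_one_add_mul_mul_comm {m k R : Type*} [Fintype m] [Fintype k] [DecidableEq m]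
    [DecidableEq k] [CommRing R] (A : Matrix m k R) (B : Matrix k m R) :
    (1 + A * B)⁻¹ * A = A * (1 + B * A)⁻¹ := by
  -- Weinstein–Aronszajn: `1 + A * B` and `1 + B * A` are invertible together, and otherwise both
  -- inverses are the junk value `0`.
  have hdet := det_one_add_mul_comm A B
  by_cases h : IsUnit (1 + A * B).det
  · have h' : IsUnit (1 + B * A).det := hdet ▸ h
    calc (1 + A * B)⁻¹ * A = (1 + A * B)⁻¹ * (A * (1 + B * A) * (1 + B * A)⁻¹) := by
          rw [mul_nonsing_inv_cancel_right _ _ h']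
      _ = (1 + A * B)⁻¹ * ((1 + A * B) * (A * (1 + B * A)⁻¹)) := by
          rw [show A * (1 + B * A) = (1 + A * B) * A by
            rw [Matrix.mul_add, Matrix.add_mul, Matrix.mul_one, Matrix.one_mul, Matrix.mul_assoc],
            Matrix.mul_assoc]
      _ = A * (1 + B * A)⁻¹ := nonsing_inv_mul_cancel_left _ _ h
  · rw [nonsing_inv_apply_not_isUnit _ h, nonsing_inv_apply_not_isUnit _ (hdet ▸ h),
      Matrix.zero_mul, Matrix.mul_zero]

variable {m 𝕜 : Type*} [Fintype m] [DecidableEq m] [RCLike 𝕜]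

theorem PosSemidef.one_sub_inv_one_add {A : Matrix m m 𝕜} (hA : A.PosSemidef) :
    (1 - (1 + A)⁻¹).PosSemidef := by
  have hunit : IsUnit (1 + A).det := (PosDef.one.add_posSemidef hA).isUnit.map detMonoidHom
  set C := (1 + A)⁻¹
  have hC : Cᴴ = C := (PosSemidef.one.add hA).inv.isHermitian.eq
  have key : 1 - C = C * (A + Aᴴ * A) * Cᴴ := by
    rw [hA.isHermitian.eq, hC]
    calc 1 - C = C * (1 + A) - C := by rw [nonsing_inv_mul _ hunit]
      _ = C * A * ((1 + A) * C) := by rw [mul_nonsing_inv _ hunit]; noncomm_ring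
      _ = C * (A + A * A) * C := by noncomm_ring
  rw [key]
  exact (hA.add (posSemidef_conjTranspose_mul_self A)).mul_mul_conjTranspose_same C

open scoped MatrixOrder in
theorem PosSemidef.exists_inv_one_add_mul_mul_eq {P Ω : Matrix m m 𝕜} (hP : P.PosSemidef)
    (hΩ : Ω.PosSemidef) : ∃ (B C : Matrix m m 𝕜), C.PosSemidef ∧ P = Bᴴ * B ∧
      (1 + P * Ω)⁻¹ * P = Bᴴ * (1 + C)⁻¹ * B := by
  obtain ⟨B, rfl⟩ := CStarAlgebra.nonneg_iff_eq_star_mul_self.mp hP.nonneg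
  refine ⟨B, B * Ω * Bᴴ, hΩ.mul_mul_conjTranspose_same B, rfl, ?_⟩
  rw [star_eq_conjTranspose, Matrix.mul_assoc Bᴴ B Ω, ← Matrix.mul_assoc _ Bᴴ B,
    inv_one_add_mul_mul_comm, Matrix.mul_assoc B Ω]

theorem PosSemidef.inv_one_add_mul_mul_s4 {P Ω : Matrix m m 𝕜} (hP : P.PosSemidef)
    (hΩ : Ω.PosSemidef) : ((1 + P * Ω)⁻¹ * P).PosSemidef := by
  obtain ⟨B, C, hC, -, hupdate⟩ := hP.exists_inv_one_add_mul_mul_eq hΩ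
  rw [hupdate]
  exact (PosSemidef.one.add hC).inv.conjTranspose_mul_mul_same B

theorem PosSemidef.sub_inv_one_add_mul_mul_s4 {P Ω : Matrix m m 𝕜} (hP : P.PosSemidef)
    (hΩ : Ω.PosSemidef) : (P - (1 + P * Ω)⁻¹ * P).PosSemidef := by
  obtain ⟨B, C, hC, hPB, hupdate⟩ := hP.exists_inv_one_add_mul_mul_eq hΩ
  rw [hupdate, hPB, show Bᴴ * B - Bᴴ * (1 + C)⁻¹ * B = Bᴴ * (1 - (1 + C)⁻¹) * B by noncomm_ring]
  exact hC.one_sub_inv_one_add.conjTranspose_mul_mul_same B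

end Matrix

section Propagator

variable {n : ℕ} (M Q : ℕ → Matrix (Fin n) (Fin n) ℝ)

theorem Mres_succ (l j : ℕ) : Mres M l (j + 1) = M (l + j + 1) * Mres M l j := rfl

theorem Mres_zero_succ (k : ℕ) : Mres M 0 (k + 1) = M (k + 1) * Mres M 0 k := by
  rw [Mres_succ, zero_add]

theorem Mres_sub_succ {l k : ℕ} (h : l ≤ k) :
    Mres M l (k + 1 - l) = M (k + 1) * Mres M l (k - l) := by
  rw [show k + 1 - l = k - l + 1 by omega, Mres_succ, show l + (k - l) = k by omega]

theorem Xi_zero : Xi M Q 0 = 0 := by simp [Xi]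

theorem Xi_succ (k : ℕ) : Xi M Q (k + 1) = M (k + 1) * Xi M Q k * (M (k + 1))ᵀ + Q (k + 1) := by
  rw [Xi, Finset.sum_Icc_succ_top (Nat.le_add_left 1 k), Nat.sub_self, Mres, Matrix.one_mul,
    transpose_one, Matrix.mul_one, Xi, Finset.mul_sum, Finset.sum_mul]
  congr 1
  refine Finset.sum_congr rfl fun l hl => ?_
  rw [Mres_sub_succ M (Finset.mem_Icc.mp hl).2, transpose_mul]
  noncomm_ring

theorem free_forecast_sub_forecast_succ (P₀ P A : Matrix (Fin n) (Fin n) ℝ) (k : ℕ) :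
    Mres M 0 (k + 1) * P₀ * (Mres M 0 (k + 1))ᵀ + Xi M Q (k + 1)
        - (M (k + 1) * A * (M (k + 1))ᵀ + Q (k + 1))
      = M (k + 1) * ((Mres M 0 k * P₀ * (Mres M 0 k)ᵀ + Xi M Q k - P) + (P - A))
          * (M (k + 1))ᵀ := by
  rw [Mres_zero_succ, Xi_succ, transpose_mul]
  noncomm_ring

end Propagator

theorem kf_free_forecast_bounds_general {n : ℕ}
    (M Ω Q : ℕ → Matrix (Fin n) (Fin n) ℝ)
    (hΩ : ∀ k, (Ω k).PosSemidef) (hQ : ∀ k, 1 ≤ k → (Q k).PosSemidef)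
    (P : ℕ → Matrix (Fin n) (Fin n) ℝ) (hP0 : (P 0).PosSemidef)
    (hrec : ∀ k, P (k + 1)
      = M (k + 1) * (1 + P k * Ω k)⁻¹ * P k * (M (k + 1))ᵀ + Q (k + 1)) :
    (∀ k, 1 ≤ k → (P k - Q k).PosSemidef) ∧
    (∀ k, (Mres M 0 k * P 0 * (Mres M 0 k)ᵀ + Xi M Q k - P k).PosSemidef) := by
  have hforecast : ∀ k, P (k + 1)
      = M (k + 1) * ((1 + P k * Ω k)⁻¹ * P k) * (M (k + 1))ᵀ + Q (k + 1) := fun k => by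
    rw [hrec, Matrix.mul_assoc (M (k + 1))]
  have hP : ∀ k, (P k).PosSemidef := fun k => by
    induction k with
    | zero => exact hP0
    | succ k ih =>
      rw [hforecast]
      exact ((ih.inv_one_add_mul_mul_s4 (hΩ k)).mul_mul_transpose_same _).add (hQ _ k.succ_pos)
  refine ⟨fun k hk => ?_, fun k => ?_⟩
  · obtain ⟨k, rfl⟩ := Nat.exists_eq_add_of_le' hk
    rw [hforecast, add_sub_cancel_right]
    exact ((hP k).inv_one_add_mul_mul_s4 (hΩ k)).mul_mul_transpose_same _
  · induction k with
    | zero => simpa [Mres, Xi_zero] using Matrix.PosSemidef.zero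
    | succ k ih =>
      rw [hforecast, free_forecast_sub_forecast_succ M Q (P 0) (P k)]
      exact (ih.add ((hP k).sub_inv_one_add_mul_mul_s4 (hΩ k))).mul_mul_transpose_same _

/-- For the Kalman filter covariance recurrence
`P_{k+1} = M_{k+1} (I + P_k Ω_k)⁻¹ P_k M_{k+1}ᵀ + Q_{k+1}`, in the Loewner order,
`Q_k ≤ P_k ≤ M_{k:0} P_0 M_{k:0}ᵀ + Ξ_k` for every `k` (the lower bound is stated
for `k ≥ 1`; for `k = 0` it is `0 ≤ P_0`, which is the hypothesis on `P_0`). -/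
theorem kf_free_forecast_bounds {n : ℕ}
    (M Ω Q : ℕ → Matrix (Fin n) (Fin n) ℝ)
    (hM : ∀ k, 1 ≤ k → IsUnit (M k))
    (hΩ : ∀ k, (Ω k).PosSemidef) (hQ : ∀ k, 1 ≤ k → (Q k).PosSemidef)
    (P : ℕ → Matrix (Fin n) (Fin n) ℝ) (hP0 : (P 0).PosSemidef)
    (hrec : ∀ k, P (k + 1)
      = M (k + 1) * (1 + P k * Ω k)⁻¹ * P k * (M (k + 1))ᵀ + Q (k + 1)) :
    (∀ k, 1 ≤ k → (P k - Q k).PosSemidef) ∧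
    (∀ k, (Mres M 0 k * P 0 * (Mres M 0 k)ᵀ + Xi M Q k - P k).PosSemidef) :=
  kf_free_forecast_bounds_general M Ω Q hΩ hQ P hP0 hrec
end

section
/- Let (M_k)_{k≥1} be invertible real n×n matrices, (Ω_k)_{k≥0} real symmetric positive semi-definite n×n matrices, P_0 a real symmetric positive semi-definite n×n matrix, and define P_{k+1} = M_{k+1}(I + P_kΩ_k)⁻¹P_kM_{k+1}ᵀ. Let M_{k:0} = M_k M_{k-1}⋯M_1 (with M_{0:0} = I). Then for every k ≥ 0, in the Loewner order, P_k ≤ M_{k:0}P_0M_{k:0}ᵀ. -/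
open Matrix

/-! For positive semidefinite `P` and `Ω`, the analysis step `P ↦ (1 + P Ω)⁻¹ P` lands between
`0` and `P` in the Loewner order, and the forecast step `P ↦ M P Mᵀ` is a congruence, so it
preserves that order. Inducting on `k` while carrying the positive semidefiniteness of `P k`
gives the bound. -/

namespace Matrix.PosSemidef

open scoped MatrixOrder ComplexOrder

variable {m 𝕜 : Type*} [Fintype m] [RCLike 𝕜] {P Q : Matrix m m 𝕜}

lemma add_mul_mul_self (hP : P.PosSemidef) (hQ : Q.PosSemidef) :
    (P + P * Q * P).PosSemidef := by
  simpa only [hP.isHermitian.eq] using hP.add (hQ.conjTranspose_mul_mul_same P)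

variable [DecidableEq m]

/-- `1 + P Q` has the determinant of `1 + √P Q √P`, which is positive definite. -/
lemma isUnit_det_one_add_mul (hP : P.PosSemidef) (hQ : Q.PosSemidef) :
    IsUnit (1 + P * Q).det := by
  set S := CFC.sqrt P
  have hS : S.PosSemidef := (CFC.sqrt_nonneg P).posSemidef
  have hSQS : (S * Q * S).PosSemidef := by
    simpa only [hS.isHermitian.eq] using hQ.conjTranspose_mul_mul_same S
  rw [← CFC.sqrt_mul_sqrt_self P hP.nonneg, Matrix.mul_assoc, det_one_add_mul_comm]
  exact (PosDef.one.add_posSemidef hSQS).isUnit.map detMonoidHom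

lemma conjTranspose_inv_one_add_mul (hP : P.PosSemidef) (hQ : Q.PosSemidef) :
    ((1 + Q * P)⁻¹)ᴴ = (1 + P * Q)⁻¹ := by
  rw [conjTranspose_nonsing_inv, conjTranspose_add, conjTranspose_one, conjTranspose_mul,
    hP.isHermitian.eq, hQ.isHermitian.eq]

/-- Writing `P = P (1 + Q P) (1 + Q P)⁻¹` exhibits `(1 + P Q)⁻¹ P` as a congruence of
`P + P Q P`. -/
lemma inv_one_add_mul_mul_self (hP : P.PosSemidef) (hQ : Q.PosSemidef) :
    ((1 + P * Q)⁻¹ * P).PosSemidef := by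
  have hR : (1 + Q * P) * (1 + Q * P)⁻¹ = 1 := mul_nonsing_inv _ (isUnit_det_one_add_mul hQ hP)
  have hX : (1 + P * Q)⁻¹ * P = ((1 + Q * P)⁻¹)ᴴ * (P + P * Q * P) * (1 + Q * P)⁻¹ := by
    calc (1 + P * Q)⁻¹ * P = (1 + P * Q)⁻¹ * (P * ((1 + Q * P) * (1 + Q * P)⁻¹)) := by
          rw [hR, Matrix.mul_one]
      _ = _ := by rw [conjTranspose_inv_one_add_mul hP hQ]; noncomm_ring
  rw [hX]
  exact (add_mul_mul_self hP hQ).conjTranspose_mul_mul_same _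

/-- Inserting `(1 + P Q)⁻¹ (1 + P Q)` and `(1 + Q P) (1 + Q P)⁻¹` around `P` exhibits
`P - (1 + P Q)⁻¹ P` as a congruence of `P Q P (1 + Q P) = P (Q + Q P Q) P`. -/
lemma sub_inv_one_add_mul_mul_self (hP : P.PosSemidef) (hQ : Q.PosSemidef) :
    (P - (1 + P * Q)⁻¹ * P).PosSemidef := by
  have hL : (1 + P * Q)⁻¹ * (1 + P * Q) = 1 := nonsing_inv_mul _ (isUnit_det_one_add_mul hP hQ)
  have hR : (1 + Q * P) * (1 + Q * P)⁻¹ = 1 := mul_nonsing_inv _ (isUnit_det_one_add_mul hQ hP)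
  have hD : P - (1 + P * Q)⁻¹ * P
      = ((1 + Q * P)⁻¹)ᴴ * (P * (Q + Q * P * Q) * P) * (1 + Q * P)⁻¹ := by
    calc P - (1 + P * Q)⁻¹ * P
        = (1 + P * Q)⁻¹ * (1 + P * Q) * P * ((1 + Q * P) * (1 + Q * P)⁻¹)
          - (1 + P * Q)⁻¹ * P * ((1 + Q * P) * (1 + Q * P)⁻¹) := by
          rw [hL, hR]; noncomm_ring
      _ = _ := by rw [conjTranspose_inv_one_add_mul hP hQ]; noncomm_ring
  rw [hD]
  have := (add_mul_mul_self hQ hP).conjTranspose_mul_mul_same P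
  rw [hP.isHermitian.eq] at this
  exact this.conjTranspose_mul_mul_same _

end Matrix.PosSemidef

lemma Matrix.PosSemidef.mul_mul_transpose_same_s5 {m n : Type*} [Fintype m] [Fintype n]
    {A : Matrix m m ℝ} (hA : A.PosSemidef) (B : Matrix n m ℝ) : (B * A * Bᵀ).PosSemidef := by
  simpa only [conjTranspose_eq_transpose_of_trivial] using hA.mul_mul_conjTranspose_same B

theorem kf_free_forecast_bound_perfect_general {n : ℕ}
    (M Ω : ℕ → Matrix (Fin n) (Fin n) ℝ)
    (hΩ : ∀ k, (Ω k).PosSemidef)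
    (P : ℕ → Matrix (Fin n) (Fin n) ℝ) (hP0 : (P 0).PosSemidef)
    (hrec : ∀ k, P (k + 1)
      = M (k + 1) * (1 + P k * Ω k)⁻¹ * P k * (M (k + 1))ᵀ) :
    ∀ k, (Mres M 0 k * P 0 * (Mres M 0 k)ᵀ - P k).PosSemidef := by
  suffices h : ∀ k, (P k).PosSemidef ∧ (Mres M 0 k * P 0 * (Mres M 0 k)ᵀ - P k).PosSemidef from
    fun k => (h k).2
  intro k
  induction k with
  | zero => simpa [Mres] using ⟨hP0, PosSemidef.zero⟩
  | succ k ih =>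
    obtain ⟨hP, hbound⟩ := ih
    set X := (1 + P k * Ω k)⁻¹ * P k
    have hstep : P (k + 1) = M (k + 1) * X * (M (k + 1))ᵀ := by
      rw [hrec, Matrix.mul_assoc (M (k + 1))]
    have hdiff : Mres M 0 (k + 1) * P 0 * (Mres M 0 (k + 1))ᵀ - P (k + 1)
        = M (k + 1) * ((Mres M 0 k * P 0 * (Mres M 0 k)ᵀ - P k) + (P k - X)) * (M (k + 1))ᵀ := by
      rw [Mres, zero_add, hstep, transpose_mul]
      noncomm_ring
    refine ⟨?_, ?_⟩
    · rw [hstep]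
      exact (PosSemidef.inv_one_add_mul_mul_self hP (hΩ k)).mul_mul_transpose_same_s5 _
    · rw [hdiff]
      exact (hbound.add (PosSemidef.sub_inv_one_add_mul_mul_self hP (hΩ k))).mul_mul_transpose_same_s5 _

/-- Perfect-model Kalman filter covariance recurrence
`P_{k+1} = M_{k+1} (I + P_k Ω_k)⁻¹ P_k M_{k+1}ᵀ`: in the Loewner order,
`P_k ≤ M_{k:0} P_0 M_{k:0}ᵀ` for every `k ≥ 0`. -/
theorem kf_free_forecast_bound_perfect {n : ℕ}
    (M Ω : ℕ → Matrix (Fin n) (Fin n) ℝ)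
    (hM : ∀ k, 1 ≤ k → IsUnit (M k)) (hΩ : ∀ k, (Ω k).PosSemidef)
    (P : ℕ → Matrix (Fin n) (Fin n) ℝ) (hP0 : (P 0).PosSemidef)
    (hrec : ∀ k, P (k + 1)
      = M (k + 1) * (1 + P k * Ω k)⁻¹ * P k * (M (k + 1))ᵀ) :
    ∀ k, (Mres M 0 k * P 0 * (Mres M 0 k)ᵀ - P k).PosSemidef :=
  kf_free_forecast_bound_perfect_general M Ω hΩ P hP0 hrec
end

section
/- Let (M_k)_{k≥1} be invertible real n×n matrices, (Ω_k)_{k≥0} real symmetric positive semi-definite n×n matrices, and P_0 a real symmetric positive semi-definite n×n matrix. Define P_{k+1} = M_{k+1}(I + P_kΩ_k)⁻¹P_kM_{k+1}ᵀ and M_{k:0} = M_k⋯M_1. Then for every k ≥ 0, rank(P_k) = rank(P_0), and the column space of P_k equals the image of the column space of P_0 under M_{k:0}, i.e. Im(P_k) = M_{k:0}(Im(P_0)). -/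
/-!
Write `Ω = Bᴴ B`. By the Weinstein–Aronszajn identity `det (1 + P Ω) = det (1 + B P Bᴴ) ≠ 0`, so
the update is well defined, and `(1 + P Ω)⁻¹ P = (1 + P Ω)⁻¹ (P + P Ω P) ((1 + P Ω)⁻¹)ᴴ` is again
positive semidefinite. By the push-through identity `(1 + P Ω)⁻¹ P = P (1 + Ω P)⁻¹` it has the
column space of `P`, hence `Im P_{k+1} = M_{k+1} (Im P_k)`; the rank is preserved because
`M_{k:0}` is invertible.
-/

open Matrix

open scoped MatrixOrder ComplexOrder

theorem Matrix.range_mulVecLin_mul {l m n R : Type*} [Fintype m] [Fintype n] [CommRing R]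
    (A : Matrix l m R) (B : Matrix m n R) :
    LinearMap.range (A * B).mulVecLin = (LinearMap.range B.mulVecLin).map A.mulVecLin := by
  rw [mulVecLin_mul, LinearMap.range_comp]

section CommRing

variable {m R : Type*} [Fintype m] [DecidableEq m] [CommRing R]

theorem Matrix.range_mulVecLin_mul_of_isUnit (A : Matrix m m R) {B : Matrix m m R}
    (hB : IsUnit B) : LinearMap.range (A * B).mulVecLin = LinearMap.range A.mulVecLin := by
  rw [mulVecLin_mul, LinearMap.range_comp_of_range_eq_top]
  exact LinearMap.range_eq_top.mpr (mulVec_surjective_iff_isUnit.mpr hB)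

theorem Matrix.isUnit_one_add_mul_comm {A B : Matrix m m R} (h : IsUnit (1 + A * B)) :
    IsUnit (1 + B * A) := by
  rwa [isUnit_iff_isUnit_det, ← det_one_add_mul_comm, ← isUnit_iff_isUnit_det]

theorem Matrix.inv_one_add_mul_mul_eq_mul_inv_one_add_mul {A B : Matrix m m R}
    (h : IsUnit (1 + A * B)) : (1 + A * B)⁻¹ * A = A * (1 + B * A)⁻¹ := by
  have := h.invertible
  have := (isUnit_one_add_mul_comm h).invertible
  rw [inv_mul_eq_iff_eq_mul_of_invertible, ← mul_assoc, eq_comm,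
    mul_inv_eq_iff_eq_mul_of_invertible]
  noncomm_ring

end CommRing

section PosSemidef

variable {𝕜 m : Type*} [RCLike 𝕜] [Fintype m] [DecidableEq m] {P Q : Matrix m m 𝕜}

theorem Matrix.PosSemidef.isUnit_one_add_mul_s9 (hP : P.PosSemidef) (hQ : Q.PosSemidef) :
    IsUnit (1 + P * Q) := by
  obtain ⟨B, rfl⟩ := CStarAlgebra.nonneg_iff_eq_star_mul_self.mp hQ.nonneg
  rw [isUnit_iff_isUnit_det, star_eq_conjTranspose, ← mul_assoc, det_one_add_mul_comm,
    ← mul_assoc, ← isUnit_iff_isUnit_det]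
  exact (PosDef.one.add_posSemidef (hP.mul_mul_conjTranspose_same B)).isUnit

theorem Matrix.PosSemidef.inv_one_add_mul_mul_self_s9 (hP : P.PosSemidef) (hQ : Q.PosSemidef) :
    ((1 + P * Q)⁻¹ * P).PosSemidef := by
  have := (isUnit_one_add_mul_comm (hP.isUnit_one_add_mul_s9 hQ)).invertible
  have hadjoint : (1 + P * Q)⁻¹ᴴ = (1 + Q * P)⁻¹ := by
    rw [conjTranspose_nonsing_inv, conjTranspose_add, conjTranspose_one, conjTranspose_mul,
      hP.isHermitian.eq, hQ.isHermitian.eq]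
  have hfactor :
      (1 + P * Q)⁻¹ * P = (1 + P * Q)⁻¹ * (P + Pᴴ * Q * P) * (1 + P * Q)⁻¹ᴴ := by
    rw [hadjoint, hP.isHermitian.eq, show P + P * Q * P = P * (1 + Q * P) by noncomm_ring,
      ← mul_assoc, mul_inv_cancel_right_of_invertible]
  rw [hfactor]
  exact (hP.add (hQ.conjTranspose_mul_mul_same P)).mul_mul_conjTranspose_same _

theorem Matrix.PosSemidef.range_inv_one_add_mul_mul_self (hP : P.PosSemidef)
    (hQ : Q.PosSemidef) :
    LinearMap.range ((1 + P * Q)⁻¹ * P).mulVecLin = LinearMap.range P.mulVecLin := by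
  rw [inv_one_add_mul_mul_eq_mul_inv_one_add_mul (hP.isUnit_one_add_mul_s9 hQ),
    range_mulVecLin_mul_of_isUnit _ (isUnit_nonsing_inv_iff.mpr (hQ.isUnit_one_add_mul_s9 hP))]

end PosSemidef

/-- `Ω` plays the role of the observation precision `Hᴴ R⁻¹ H`. -/
noncomputable def forecastCov {𝕜 m : Type*} [RCLike 𝕜] [Fintype m] [DecidableEq m]
    (M Ω P : Matrix m m 𝕜) : Matrix m m 𝕜 :=
  M * (1 + P * Ω)⁻¹ * P * Mᴴ

section forecastCov

variable {𝕜 m : Type*} [RCLike 𝕜] [Fintype m] [DecidableEq m] {M Ω P : Matrix m m 𝕜}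

theorem Matrix.PosSemidef.forecastCov (hP : P.PosSemidef) (hΩ : Ω.PosSemidef)
    (M : Matrix m m 𝕜) :
    (forecastCov M Ω P).PosSemidef := by
  rw [_root_.forecastCov, mul_assoc M]
  exact (hP.inv_one_add_mul_mul_self_s9 hΩ).mul_mul_conjTranspose_same M

theorem range_forecastCov (hP : P.PosSemidef) (hΩ : Ω.PosSemidef) (hM : IsUnit M) :
    LinearMap.range (forecastCov M Ω P).mulVecLin = LinearMap.range (M * P).mulVecLin := by
  rw [forecastCov, range_mulVecLin_mul_of_isUnit _ ((isUnit_conjTranspose M).mpr hM), mul_assoc,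
    range_mulVecLin_mul, hP.range_inv_one_add_mul_mul_self hΩ, ← range_mulVecLin_mul]

end forecastCov

theorem isUnit_Mres {n : ℕ} {M : ℕ → Matrix (Fin n) (Fin n) ℝ} {l : ℕ}
    (hM : ∀ k, l < k → IsUnit (M k)) : ∀ j, IsUnit (Mres M l j)
  | 0 => isUnit_one
  | j + 1 => (hM _ (by omega)).mul (isUnit_Mres hM j)

/-- Perfect-model Kalman filter: the rank of `P_k` equals the rank of `P_0`, and
the column space of `P_k` is the image under `M_{k:0}` of the column space of
`P_0`: `Im(P_k) = M_{k:0}(Im(P_0))`. -/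
theorem kf_rank_and_column_space {n : ℕ}
    (M Ω : ℕ → Matrix (Fin n) (Fin n) ℝ)
    (hM : ∀ k, 1 ≤ k → IsUnit (M k)) (hΩ : ∀ k, (Ω k).PosSemidef)
    (P : ℕ → Matrix (Fin n) (Fin n) ℝ) (hP0 : (P 0).PosSemidef)
    (hrec : ∀ k, P (k + 1)
      = M (k + 1) * (1 + P k * Ω k)⁻¹ * P k * (M (k + 1))ᵀ) :
    ∀ k, (P k).rank = (P 0).rank ∧
      LinearMap.range (P k).mulVecLin
        = Submodule.map (Mres M 0 k).mulVecLin (LinearMap.range (P 0).mulVecLin) := by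
  have hstep : ∀ k, P (k + 1) = forecastCov (M (k + 1)) (Ω k) (P k) := fun k ↦ by
    rw [hrec, forecastCov, conjTranspose_eq_transpose_of_trivial]
  have hinvariant : ∀ k, (P k).PosSemidef ∧
      LinearMap.range (P k).mulVecLin = LinearMap.range (Mres M 0 k * P 0).mulVecLin := by
    intro k
    induction k with
    | zero => exact ⟨hP0, by rw [Mres, one_mul]⟩
    | succ k ih =>
      rw [hstep]
      refine ⟨ih.1.forecastCov (hΩ k) _, ?_⟩
      rw [range_forecastCov ih.1 (hΩ k) (hM _ k.succ_pos), range_mulVecLin_mul, ih.2,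
        ← range_mulVecLin_mul, ← mul_assoc, Mres, zero_add]
  intro k
  have hrange := (hinvariant k).2
  refine ⟨?_, hrange.trans (range_mulVecLin_mul _ _)⟩
  rw [rank, hrange, ← rank,
    rank_mul_eq_right_of_isUnit_det _ _ ((isUnit_Mres hM k).map detMonoidHom)]
end

section
/- Let M be an invertible real n×n matrix and let Ω and Q be real symmetric n×n matrices. Let Z be the 2n×2n block matrix Z = [[M + QM^{-ᵀ}Ω, QM^{-ᵀ}], [M^{-ᵀ}Ω, M^{-ᵀ}]] and J = [[0, I_n], [−I_n, 0]]. Then Z is symplectic: Z is invertible with Z⁻¹ = −JZᵀJ (equivalently ZJZᵀ = J). -/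
/-!
`Z` factors as `[[1, Q], [0, 1]] * [[M, 0], [0, M⁻ᵀ]] * [[1, 0], [Ω, 1]]`: a shear by the
symmetric matrix `Q`, the block-diagonal matrix `diag(M, M⁻ᵀ)`, and a shear by the symmetric
matrix `Ω`. Each factor is symplectic, hence so is `Z`, and a symplectic matrix is inverted by
`A⁻¹ = -J Aᵀ J`.
-/

open Matrix

namespace SymplecticGroup

variable {l R : Type*} [DecidableEq l] [CommRing R]

theorem neg_J : -J l R = fromBlocks 0 1 (-1) 0 := by
  simp [J, fromBlocks_neg]

variable [Fintype l]

theorem fromBlocks_one_isSymm_zero_one_mem {S : Matrix l l R} (hS : S.IsSymm) :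
    fromBlocks 1 S 0 1 ∈ symplecticGroup l R :=
  fromBlocks_mem_iff.2 ⟨by simp, by simpa using hS.eq, by simp⟩

theorem fromBlocks_one_zero_isSymm_one_mem {S : Matrix l l R} (hS : S.IsSymm) :
    fromBlocks 1 0 S 1 ∈ symplecticGroup l R :=
  fromBlocks_mem_iff.2 ⟨by simpa using hS.eq.symm, by simp, by simp⟩

theorem fromBlocks_self_zero_zero_inv_transpose_mem {M : Matrix l l R} (hM : IsUnit M) :
    fromBlocks M 0 0 M⁻¹ᵀ ∈ symplecticGroup l R := by
  have hMinvM : M⁻¹ * M = 1 := nonsing_inv_mul M ((isUnit_iff_isUnit_det M).1 hM)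
  refine fromBlocks_mem_iff.2 ⟨by simp, by simp, ?_⟩
  rw [← transpose_mul, hMinvM, transpose_zero, Matrix.mul_zero, sub_zero, transpose_one]

theorem isUnit_and_inv_eq {A : Matrix (l ⊕ l) (l ⊕ l) R} (hA : A ∈ symplecticGroup l R) :
    IsUnit A ∧ A⁻¹ = -(fromBlocks (0 : Matrix l l R) 1 (-1) 0 * Aᵀ *
      fromBlocks (0 : Matrix l l R) 1 (-1) 0) := by
  refine ⟨(isUnit_iff_isUnit_det A).2 (symplectic_det hA), ?_⟩
  rw [inv_eq_symplectic_inv A hA, ← neg_J, Matrix.mul_neg, neg_neg]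

end SymplecticGroup

theorem Matrix.fromBlocks_eq_shear_mul_diag_mul_shear {l R : Type*} [Fintype l] [DecidableEq l]
    [Semiring R] (M N Q Ω : Matrix l l R) :
    fromBlocks (M + Q * N * Ω) (Q * N) (N * Ω) N =
      fromBlocks 1 Q 0 1 * fromBlocks M 0 0 N * fromBlocks 1 0 Ω 1 := by
  simp [fromBlocks_multiply, Matrix.mul_assoc]

open SymplecticGroup in
/-- The one-step transition matrix of the linear representation of the Kalman
filter Riccati recurrence,
`Z = [[M + Q M⁻ᵀ Ω, Q M⁻ᵀ], [M⁻ᵀ Ω, M⁻ᵀ]]`, is symplectic: it is invertible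
with `Z⁻¹ = -J Zᵀ J`, where `J = [[0, I], [-I, 0]]`. -/
theorem kf_transition_is_symplectic {n : ℕ}
    (M Ω Q : Matrix (Fin n) (Fin n) ℝ) (hM : IsUnit M)
    (hΩ : Ωᵀ = Ω) (hQ : Qᵀ = Q) :
    IsUnit (Matrix.fromBlocks (M + Q * (M⁻¹)ᵀ * Ω) (Q * (M⁻¹)ᵀ) ((M⁻¹)ᵀ * Ω) ((M⁻¹)ᵀ)) ∧
    (Matrix.fromBlocks (M + Q * (M⁻¹)ᵀ * Ω) (Q * (M⁻¹)ᵀ) ((M⁻¹)ᵀ * Ω) ((M⁻¹)ᵀ))⁻¹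
      = -(Matrix.fromBlocks (0 : Matrix (Fin n) (Fin n) ℝ) 1 (-1) 0
          * (Matrix.fromBlocks (M + Q * (M⁻¹)ᵀ * Ω) (Q * (M⁻¹)ᵀ) ((M⁻¹)ᵀ * Ω) ((M⁻¹)ᵀ))ᵀ
          * Matrix.fromBlocks (0 : Matrix (Fin n) (Fin n) ℝ) 1 (-1) 0) := by
  refine isUnit_and_inv_eq ?_
  rw [fromBlocks_eq_shear_mul_diag_mul_shear]
  exact mul_mem (mul_mem (fromBlocks_one_isSymm_zero_one_mem hQ)
    (fromBlocks_self_zero_zero_inv_transpose_mem hM)) (fromBlocks_one_zero_isSymm_one_mem hΩ)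
end

section
/- Let M be an invertible real n×n matrix and let P, Ω, Q be real symmetric positive semi-definite n×n matrices. Set A = M + QM^{-ᵀ}Ω, B = QM^{-ᵀ}, C = M^{-ᵀ}Ω, D = M^{-ᵀ}. Then CP + D is invertible and M(I + PΩ)⁻¹PMᵀ + Q = (AP + B)(CP + D)⁻¹. -/
/-!
Both sides of the Möbius action factor through `1 + Ω P`: `C P + D = M⁻ᵀ (1 + Ω P)` and
`A P + B = M P + Q M⁻ᵀ (1 + Ω P)`, so `(A P + B) (C P + D)⁻¹ = M P (1 + Ω P)⁻¹ Mᵀ + Q`.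
The push-through identity `(1 + P Ω)⁻¹ P = P (1 + Ω P)⁻¹` turns this into the Riccati step.
-/

namespace Matrix

variable {n : Type*} [Fintype n] [DecidableEq n]

open scoped MatrixOrder ComplexOrder in
/-- Writing `P = Bᴴ B`, Sylvester's determinant identity gives
`det (1 + Ω P) = det (1 + B Ω Bᴴ)`, and `1 + B Ω Bᴴ` is positive definite. -/
theorem PosSemidef.isUnit_one_add_mul_s18 {𝕜 : Type*} [RCLike 𝕜] {Ω P : Matrix n n 𝕜}
    (hΩ : Ω.PosSemidef) (hP : P.PosSemidef) : IsUnit (1 + Ω * P) := by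
  obtain ⟨B, rfl⟩ := CStarAlgebra.nonneg_iff_eq_star_mul_self.mp hP.nonneg
  have hpd : (1 + B * Ω * Bᴴ).PosDef :=
    PosDef.one.add_posSemidef (hΩ.mul_mul_conjTranspose_same B)
  rw [isUnit_iff_isUnit_det, star_eq_conjTranspose, ← Matrix.mul_assoc, det_one_add_mul_comm,
    ← Matrix.mul_assoc, ← isUnit_iff_isUnit_det]
  exact hpd.isUnit

variable {α : Type*} [CommRing α]

theorem inv_one_add_mul_mul_comm_s18 {P Ω : Matrix n n α} (h : IsUnit (1 + Ω * P)) :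
    (1 + P * Ω)⁻¹ * P = P * (1 + Ω * P)⁻¹ := by
  have hΩP := (isUnit_iff_isUnit_det _).mp h
  have hPΩ : IsUnit (1 + P * Ω).det := by rwa [det_one_add_mul_comm]
  calc (1 + P * Ω)⁻¹ * P = (1 + P * Ω)⁻¹ * (P * (1 + Ω * P)) * (1 + Ω * P)⁻¹ := by
        rw [Matrix.mul_assoc, Matrix.mul_assoc, mul_nonsing_inv _ hΩP, Matrix.mul_one]
    _ = (1 + P * Ω)⁻¹ * ((1 + P * Ω) * P) * (1 + Ω * P)⁻¹ := by noncomm_ring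
    _ = P * (1 + Ω * P)⁻¹ := by rw [nonsing_inv_mul_cancel_left _ _ hPΩ]

theorem riccati_step_eq_moebius {M P Ω Q : Matrix n n α} (hM : IsUnit M)
    (hΩP : IsUnit (1 + Ω * P)) :
    M * (1 + P * Ω)⁻¹ * P * Mᵀ + Q
      = ((M + Q * (M⁻¹)ᵀ * Ω) * P + Q * (M⁻¹)ᵀ) * ((M⁻¹)ᵀ * Ω * P + (M⁻¹)ᵀ)⁻¹ := by
  have hMdet := (isUnit_iff_isUnit_det _).mp hM
  have hden : ((M⁻¹)ᵀ * Ω * P + (M⁻¹)ᵀ)⁻¹ = (1 + Ω * P)⁻¹ * Mᵀ := by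
    rw [show (M⁻¹)ᵀ * Ω * P + (M⁻¹)ᵀ = (M⁻¹)ᵀ * (1 + Ω * P) by noncomm_ring, mul_inv_rev,
      transpose_nonsing_inv, nonsing_inv_nonsing_inv _ (isUnit_det_transpose _ hMdet)]
  have hnum : (M + Q * (M⁻¹)ᵀ * Ω) * P + Q * (M⁻¹)ᵀ
      = M * P + Q * (M⁻¹)ᵀ * (1 + Ω * P) := by noncomm_ring
  have hΩP' := (isUnit_iff_isUnit_det _).mp hΩP
  rw [hden, hnum, Matrix.add_mul, Matrix.mul_assoc (Q * (M⁻¹)ᵀ), ← Matrix.mul_assoc (1 + Ω * P),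
    mul_nonsing_inv _ hΩP', Matrix.one_mul, Matrix.mul_assoc Q, ← transpose_mul,
    mul_nonsing_inv _ hMdet, transpose_one, Matrix.mul_one, Matrix.mul_assoc M (1 + P * Ω)⁻¹,
    inv_one_add_mul_mul_comm_s18 hΩP]
  simp only [Matrix.mul_assoc]

end Matrix

open Matrix

theorem kf_step_moebius_general {n : ℕ}
    (M P Ω Q : Matrix (Fin n) (Fin n) ℝ) (hM : IsUnit M)
    (hP : P.PosSemidef) (hΩ : Ω.PosSemidef) :
    IsUnit ((M⁻¹)ᵀ * Ω * P + (M⁻¹)ᵀ) ∧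
    M * (1 + P * Ω)⁻¹ * P * Mᵀ + Q
      = ((M + Q * (M⁻¹)ᵀ * Ω) * P + Q * (M⁻¹)ᵀ)
        * ((M⁻¹)ᵀ * Ω * P + (M⁻¹)ᵀ)⁻¹ := by
  have hΩP := hΩ.isUnit_one_add_mul_s18 hP
  have hden : (M⁻¹)ᵀ * Ω * P + (M⁻¹)ᵀ = (M⁻¹)ᵀ * (1 + Ω * P) := by noncomm_ring
  exact ⟨hden ▸ ((isUnit_transpose _).2 (isUnit_nonsing_inv_iff.2 hM)).mul hΩP,
    riccati_step_eq_moebius hM hΩP⟩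

/-- The Kalman filter Riccati step as a Möbius (linear fractional) action:
with `A = M + Q M⁻ᵀ Ω`, `B = Q M⁻ᵀ`, `C = M⁻ᵀ Ω`, `D = M⁻ᵀ`, the matrix
`C P + D` is invertible and
`M (I + P Ω)⁻¹ P Mᵀ + Q = (A P + B) (C P + D)⁻¹`. -/
theorem kf_step_moebius {n : ℕ}
    (M P Ω Q : Matrix (Fin n) (Fin n) ℝ) (hM : IsUnit M)
    (hP : P.PosSemidef) (hΩ : Ω.PosSemidef) (hQ : Q.PosSemidef) :
    IsUnit ((M⁻¹)ᵀ * Ω * P + (M⁻¹)ᵀ) ∧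
    M * (1 + P * Ω)⁻¹ * P * Mᵀ + Q
      = ((M + Q * (M⁻¹)ᵀ * Ω) * P + Q * (M⁻¹)ᵀ)
        * ((M⁻¹)ᵀ * Ω * P + (M⁻¹)ᵀ)⁻¹ :=
  kf_step_moebius_general M P Ω Q hM hP hΩ
end
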